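/- Let h be bounded by b₀, and suppose for each α the weight function λ ↦ w_α(λ) = p_Λ(λ|α)/p_Λ(λ|α*) satisfies: p_Λ(λ|·) is differentiable in α with ‖∇_α p_Λ(λ|α)‖ ≤ b₄, p_Λ(λ|α) ≤ b₂, and p_Λ(λ|α*) ≥ b₃ > 0, for all λ ∈ K, α ∈ A. Then for any λ₁,…,λ_M ∈ K, the partial derivatives of the self-normalized estimator Ê_M(α) = [Σ_k h(λ_k)w_α(λ_k)]/[Σ_k w_α(λ_k)] with respect to each coordinate α_a are bounded in absolute value by 2 b₀ b₂ b₄ / b₃². -/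

import Mathlib

/-!
Write the estimator as `N / G` with `N = ∑ h(λₖ) wₖ` and `G = ∑ wₖ`. Its directional derivative
is `N'/G - (N/G) (G'/G)`, and each of `N/G`, `N'/G`, `G'/G` is controlled as a weighted average:
`|N/G| ≤ b₀`, while `|wₖ'| ≤ b₄ / p(λₖ|α*) ≤ (b₄/b₃) wₖ` gives `|G'/G| ≤ b₄/b₃` and
`|N'/G| ≤ b₀ b₄/b₃`. Hence the derivative is at most `2 b₀ b₄ / b₃ ≤ 2 b₀ b₂ b₄ / b₃²`,
since `b₃ ≤ b₂`.
-/

open Finset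

theorem abs_sum_mul_le_mul_sum {ι : Type*} (s : Finset ι) {a b c : ι → ℝ} {B : ℝ}
    (ha : ∀ k ∈ s, |a k| ≤ B) (hb : ∀ k ∈ s, |b k| ≤ c k) :
    |∑ k ∈ s, a k * b k| ≤ B * ∑ k ∈ s, c k := by
  rw [mul_sum]
  refine (abs_sum_le_sum_abs _ _).trans (sum_le_sum fun k hk => ?_)
  rw [abs_mul]
  exact mul_le_mul (ha k hk) (hb k hk) (abs_nonneg _) ((abs_nonneg _).trans (ha k hk))

section
variable {E : Type*} [NormedAddCommGroup E] [NormedSpace ℝ E]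

theorem HasFDerivAt.div {N G : E → ℝ} {N' G' : E →L[ℝ] ℝ} {x : E}
    (hN : HasFDerivAt N N' x) (hG : HasFDerivAt G G' x) (hGx : G x ≠ 0) :
    HasFDerivAt (fun y => N y / G y) ((G x)⁻¹ • N' - (N x / G x ^ 2) • G') x := by
  have hinv : HasFDerivAt (fun y => (G y)⁻¹) (-(G x ^ 2)⁻¹ • G') x :=
    (hasDerivAt_inv hGx).comp_hasFDerivAt x hG
  simp only [div_eq_mul_inv]
  refine (hN.mul hinv).congr_fderiv ?_
  ext v
  simp only [add_apply, sub_apply, smul_apply, smul_eq_mul]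
  ring

theorem abs_fderiv_div_apply_le {N G : E → ℝ} {N' G' : E →L[ℝ] ℝ} {x : E} (v : E)
    {B L : ℝ}
    (hN : HasFDerivAt N N' x) (hG : HasFDerivAt G G' x) (hGx : 0 < G x)
    (hNG : |N x| ≤ B * G x) (hN' : |N' v| ≤ B * L * G x) (hG' : |G' v| ≤ L * G x) :
    |fderiv ℝ (fun y => N y / G y) x v| ≤ 2 * B * L := by
  have hB : 0 ≤ B := nonneg_of_mul_nonneg_left ((abs_nonneg _).trans hNG) hGx
  have hN'G : |N' v / G x| ≤ B * L := by rwa [abs_div, abs_of_pos hGx, div_le_iff₀ hGx]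
  have hNG' : |N x / G x| ≤ B := by rwa [abs_div, abs_of_pos hGx, div_le_iff₀ hGx]
  have hG'G : |G' v / G x| ≤ L := by rwa [abs_div, abs_of_pos hGx, div_le_iff₀ hGx]
  have hderiv : fderiv ℝ (fun y => N y / G y) x v = N' v / G x - N x / G x * (G' v / G x) := by
    rw [(hN.div hG hGx.ne').fderiv]
    simp only [sub_apply, smul_apply, smul_eq_mul]
    field_simp
  calc |fderiv ℝ (fun y => N y / G y) x v|
      ≤ |N' v / G x| + |N x / G x| * |G' v / G x| := by
        rw [hderiv, ← abs_mul]; exact abs_sub _ _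
    _ ≤ B * L + B * L := by gcongr
    _ = 2 * B * L := by ring

theorem abs_fderiv_selfNormalized_apply_le {ι : Type*} (s : Finset ι) (h : ι → ℝ)
    {w : ι → E → ℝ} {w' : ι → E →L[ℝ] ℝ} {x : E} (v : E) {B L : ℝ}
    (hw : ∀ k ∈ s, HasFDerivAt (w k) (w' k) x) (hw_nonneg : ∀ k ∈ s, 0 ≤ w k x)
    (hsum : 0 < ∑ k ∈ s, w k x) (hh : ∀ k ∈ s, |h k| ≤ B)
    (hw' : ∀ k ∈ s, |w' k v| ≤ L * w k x) :
    |fderiv ℝ (fun y => (∑ k ∈ s, h k * w k y) / ∑ k ∈ s, w k y) x v| ≤ 2 * B * L := by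
  have hN : HasFDerivAt (fun y => ∑ k ∈ s, h k * w k y) (∑ k ∈ s, h k • w' k) x :=
    HasFDerivAt.fun_sum fun k hk => (hw k hk).const_mul (h k)
  have hG : HasFDerivAt (fun y => ∑ k ∈ s, w k y) (∑ k ∈ s, w' k) x :=
    HasFDerivAt.fun_sum hw
  refine abs_fderiv_div_apply_le v hN hG hsum ?_ ?_ ?_
  · exact abs_sum_mul_le_mul_sum s hh fun k hk => (abs_of_nonneg (hw_nonneg k hk)).le
  · simpa only [_root_.sum_apply, smul_apply, smul_eq_mul, mul_assoc, mul_sum]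
      using abs_sum_mul_le_mul_sum s hh hw'
  · rw [_root_.sum_apply, mul_sum]
    exact (abs_sum_le_sum_abs _ _).trans (sum_le_sum hw')
theorem abs_inv_smul_apply_le_mul_div {D : E →L[ℝ] ℝ} {v : E} {b c p C : ℝ} (hc : 0 < c)
    (hb : 0 < b) (hbp : b ≤ p) (hD : ‖D‖ ≤ C) (hv : ‖v‖ ≤ 1) :
    |(c⁻¹ • D) v| ≤ C / b * (p / c) := by
  have hC : 0 ≤ C := (norm_nonneg D).trans hD
  have hDv : |D v| ≤ C := by
    simpa only [Real.norm_eq_abs] using D.le_of_opNorm_le_of_le hD hv |>.trans_eq (mul_one C)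
  calc |(c⁻¹ • D) v| = |D v| / c := by
        rw [smul_apply, smul_eq_mul, abs_mul, abs_inv, abs_of_pos hc, inv_mul_eq_div]
    _ ≤ C / b * (b / c) := by rw [div_mul_div_cancel₀ hb.ne']; gcongr
    _ ≤ C / b * (p / c) := by gcongr
end

theorem stmt_10_general {q r : ℕ}
    (K : Set (EuclideanSpace ℝ (Fin q)))
    (b₀ b₂ b₃ b₄ : ℝ) (hb₀ : 0 < b₀) (hb₃ : 0 < b₃)
    (hb₄ : 0 < b₄)
    (h : EuclideanSpace ℝ (Fin q) → ℝ)
    (hh : ∀ lam ∈ K, |h lam| ≤ b₀)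
    (p : EuclideanSpace ℝ (Fin r) → EuclideanSpace ℝ (Fin q) → ℝ)
    (D : EuclideanSpace ℝ (Fin r) → EuclideanSpace ℝ (Fin q) →
      (EuclideanSpace ℝ (Fin r) →L[ℝ] ℝ))
    (hderiv : ∀ α, ∀ lam ∈ K, HasFDerivAt (fun α' => p α' lam) (D α lam) α)
    (hDbdd : ∀ α, ∀ lam ∈ K, ‖D α lam‖ ≤ b₄)
    (hlower : ∀ α, ∀ lam ∈ K, b₃ ≤ p α lam)
    (hupper : ∀ α, ∀ lam ∈ K, p α lam ≤ b₂)
    (αstar : EuclideanSpace ℝ (Fin r))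
    (M : ℕ) (hM : 0 < M) (lams : Fin M → EuclideanSpace ℝ (Fin q))
    (hlams : ∀ k, lams k ∈ K)
    (Ehat : EuclideanSpace ℝ (Fin r) → ℝ)
    (hEhat : ∀ α, Ehat α
      = (∑ k, h (lams k) * (p α (lams k) / p αstar (lams k)))
        / (∑ k, p α (lams k) / p αstar (lams k))) :
    ∀ α, ∀ a : Fin r,
      |fderiv ℝ Ehat α (EuclideanSpace.single a 1)| ≤ 2 * b₀ * b₂ * b₄ / b₃ ^ 2 := by
  intro α a
  set c : Fin M → ℝ := fun k => p αstar (lams k)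
  have hc : ∀ k, 0 < c k := fun k => hb₃.trans_le (hlower αstar _ (hlams k))
  have hw_pos : ∀ k, 0 < p α (lams k) / c k := fun k =>
    div_pos (hb₃.trans_le (hlower α _ (hlams k))) (hc k)
  have hE := abs_fderiv_selfNormalized_apply_le univ (fun k => h (lams k))
    (w := fun k α' => p α' (lams k) / c k) (EuclideanSpace.single a (1 : ℝ))
    (fun k _ => by simpa only [div_eq_mul_inv] using (hderiv α _ (hlams k)).mul_const (c k)⁻¹)
    (fun k _ => (hw_pos k).le)
    (sum_pos (fun k _ => hw_pos k) (univ_nonempty_iff.mpr ⟨⟨0, hM⟩⟩))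
    (fun k _ => hh _ (hlams k))
    (fun k _ => abs_inv_smul_apply_le_mul_div (hc k) hb₃ (hlower α _ (hlams k))
      (hDbdd α _ (hlams k)) (by simp [PiLp.norm_single]))
  have hb₃₂ : b₃ ≤ b₂ :=
    (hlower α _ (hlams ⟨0, hM⟩)).trans (hupper α _ (hlams ⟨0, hM⟩))
  rw [show Ehat = _ from funext hEhat]
  calc _ ≤ 2 * b₀ * (b₄ / b₃) := hE
    _ ≤ 2 * b₀ * (b₄ / b₃) * (b₂ / b₃) :=
        le_mul_of_one_le_right (by positivity) ((one_le_div hb₃).mpr hb₃₂)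
    _ = 2 * b₀ * b₂ * b₄ / b₃ ^ 2 := by field_simp

/-- Bound on the partial derivatives of the self-normalized importance
sampling estimator with respect to the hyperparameter coordinates. -/
theorem stmt_10 {q r : ℕ}
    (K : Set (EuclideanSpace ℝ (Fin q)))
    (b₀ b₂ b₃ b₄ : ℝ) (hb₀ : 0 < b₀) (hb₂ : 0 < b₂) (hb₃ : 0 < b₃)
    (hb₄ : 0 < b₄)
    (h : EuclideanSpace ℝ (Fin q) → ℝ)
    (hh : ∀ lam ∈ K, |h lam| ≤ b₀)
    (p : EuclideanSpace ℝ (Fin r) → EuclideanSpace ℝ (Fin q) → ℝ)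
    (D : EuclideanSpace ℝ (Fin r) → EuclideanSpace ℝ (Fin q) →
      (EuclideanSpace ℝ (Fin r) →L[ℝ] ℝ))
    (hderiv : ∀ α, ∀ lam ∈ K, HasFDerivAt (fun α' => p α' lam) (D α lam) α)
    (hDbdd : ∀ α, ∀ lam ∈ K, ‖D α lam‖ ≤ b₄)
    (hlower : ∀ α, ∀ lam ∈ K, b₃ ≤ p α lam)
    (hupper : ∀ α, ∀ lam ∈ K, p α lam ≤ b₂)
    (αstar : EuclideanSpace ℝ (Fin r))
    (M : ℕ) (hM : 0 < M) (lams : Fin M → EuclideanSpace ℝ (Fin q))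
    (hlams : ∀ k, lams k ∈ K)
    (Ehat : EuclideanSpace ℝ (Fin r) → ℝ)
    (hEhat : ∀ α, Ehat α
      = (∑ k, h (lams k) * (p α (lams k) / p αstar (lams k)))
        / (∑ k, p α (lams k) / p αstar (lams k))) :
    ∀ α, ∀ a : Fin r,
      |fderiv ℝ Ehat α (EuclideanSpace.single a 1)| ≤ 2 * b₀ * b₂ * b₄ / b₃ ^ 2 :=
  stmt_10_general K b₀ b₂ b₃ b₄ hb₀ hb₃ hb₄ h hh p D hderiv hDbdd hlower hupper αstar M hM lams
    hlams Ehat hEhat
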